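/- arXiv:2004.02994 — 2 statements merged into one kernel-verified Lean document; each statement's English description precedes it below -/
import Mathlib

section
/- With the setup of the weighted linear map L sending D to Λ (Λ(k) = w_o·Dtot + ∑_i w_{m,i}·D(i;k_i) + w_s·D(k)): if w_s > 0, then L is injective on integer arrays, i.e., L(D) = L(D') implies D = D'. -/
open Finset

theorem stmt1 (I : ℕ) (hI : 1 ≤ I) (m : Fin I → ℕ) (hm : ∀ i, 1 < m i)
    (wo ws : ℝ) (wm : Fin I → ℝ)
    (hwo : 0 ≤ wo) (hws : 0 < ws) (hwm : ∀ i, 0 ≤ wm i)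
    (hwsum : wo + ws + ∑ i, wm i = 1)
    (L : ((∀ i, Fin (m i)) → ℤ) → ((∀ i, Fin (m i)) → ℝ))
    (hL : ∀ E k, L E k
      = wo * (∑ k', (E k' : ℝ))
        + (∑ i, wm i * ∑ k' ∈ Finset.univ.filter (fun k' => k' i = k i), (E k' : ℝ))
        + ws * E k)
    (D D' : (∀ i, Fin (m i)) → ℤ) (h : L D = L D') :
    D = D' := by
  set f : (∀ i, Fin (m i)) → ℝ := fun k => (D k : ℝ) - (D' k : ℝ) with hf
  have key : ∀ k, wo * (∑ k', f k')
      + (∑ i, wm i * ∑ k' ∈ Finset.univ.filter (fun k' => k' i = k i), f k')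
      + ws * f k = 0 := by
    intro k
    have h1 := congrFun h k
    rw [hL D k, hL D' k] at h1
    simp only [hf, Finset.sum_sub_distrib, mul_sub]
    linarith
  have fiber : ∀ i : Fin I,
      ∑ k, f k * (∑ k' ∈ Finset.univ.filter (fun k' => k' i = k i), f k')
      = ∑ v : Fin (m i), (∑ k ∈ Finset.univ.filter (fun k => k i = v), f k)^2 := by
    intro i
    rw [← Finset.sum_fiberwise Finset.univ (fun k => k i)
      (fun k => f k * (∑ k' ∈ Finset.univ.filter (fun k' => k' i = k i), f k'))]
    refine Finset.sum_congr rfl fun v _ => ?_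
    have hcg : ∀ k ∈ Finset.univ.filter (fun k => k i = v),
        f k * (∑ k' ∈ Finset.univ.filter (fun k' => k' i = k i), f k')
        = f k * (∑ k' ∈ Finset.univ.filter (fun k' => k' i = v), f k') := by
      intro k hk
      simp only [Finset.mem_filter] at hk
      rw [hk.2]
    rw [Finset.sum_congr rfl hcg, ← Finset.sum_mul, sq]
  have h0 : (0:ℝ) = wo * (∑ k, f k)^2
      + ∑ i, wm i * ∑ v : Fin (m i), (∑ k ∈ Finset.univ.filter (fun k => k i = v), f k)^2
      + ws * ∑ k, (f k)^2 := by
    have hz : ∑ k, f k * (wo * (∑ k', f k')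
        + (∑ i, wm i * ∑ k' ∈ Finset.univ.filter (fun k' => k' i = k i), f k')
        + ws * f k) = 0 := by
      simp only [key, mul_zero, Finset.sum_const_zero]
    rw [← hz]
    simp only [mul_add, Finset.sum_add_distrib]
    congr 1
    congr 1
    · rw [← Finset.sum_mul, sq]; ring
    · have step : ∀ x, f x * ∑ i, wm i * ∑ k' ∈ Finset.univ.filter (fun k' => k' i = x i), f k'
          = ∑ i, wm i * (f x * ∑ k' ∈ Finset.univ.filter (fun k' => k' i = x i), f k') := by
        intro x
        rw [Finset.mul_sum]
        exact Finset.sum_congr rfl fun i _ => by ring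
      simp only [step]
      rw [Finset.sum_comm]
      refine Finset.sum_congr rfl fun i _ => ?_
      rw [← Finset.mul_sum, fiber i]
    · rw [Finset.mul_sum]
      refine Finset.sum_congr rfl fun k _ => ?_
      ring
  have hB : 0 ≤ ∑ i, wm i * ∑ v : Fin (m i),
      (∑ k ∈ Finset.univ.filter (fun k => k i = v), f k)^2 :=
    Finset.sum_nonneg fun i _ => mul_nonneg (hwm i)
      (Finset.sum_nonneg fun v _ => sq_nonneg _)
  have hA : 0 ≤ wo * (∑ k, f k)^2 := mul_nonneg hwo (sq_nonneg _)
  have hCn : 0 ≤ ∑ k, (f k)^2 := Finset.sum_nonneg fun k _ => sq_nonneg _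
  have hC : ∑ k, (f k)^2 = 0 := by nlinarith
  have hfz : ∀ k, f k = 0 := by
    intro k
    have hk := (Finset.sum_eq_zero_iff_of_nonneg
      (fun k _ => sq_nonneg (f k))).mp hC k (Finset.mem_univ k)
    exact pow_eq_zero_iff (two_ne_zero) |>.mp hk
  funext k
  have hk := hfz k
  simp only [hf] at hk
  exact_mod_cast sub_eq_zero.mp hk
end

section
/- With the weighted linear map L as above, summing Λ(k) over all coordinates except the i-th yields: ∑_{k₁,...,k_{i-1},k_{i+1},...,k_I} Λ(k) = (w_s + w_{m,i}·∏_{j≠i} m_j)·D(i;k_i) + (∑_{l≠i} w_{m,l}·∏_{j≠i,l} m_j + w_o·∏_{j≠i} m_j)·Dtot. Consequently, if w_s + w_{m,i} > 0, each marginal sum D(i;k_i) is determined by Λ and Dtot. -/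
open Finset

section helpers

variable {I : ℕ} {m : Fin I → ℕ}

private lemma prod_eval_update₂ (i l : Fin I) (hil : l ≠ i) (ki : Fin (m i))
    (h : Fin (m l) → ℝ) (g : ∀ j, Fin (m j) → ℝ)
    (hg : g = Function.update (Function.update (fun j (_ : Fin (m j)) => (1:ℝ)) i
      (fun x => if x = ki then 1 else 0)) l h) (k : ∀ j, Fin (m j)) :
    ∏ j, g j (k j) = (if k i = ki then 1 else 0) * h (k l) := by
  subst hg
  rw [← Finset.prod_erase_mul univ _ (mem_univ l),
    ← Finset.prod_erase_mul _ _ (mem_erase.2 ⟨fun hh => hil hh.symm, mem_univ i⟩)]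
  have h1 : ∀ j ∈ (univ.erase l).erase i,
      (Function.update (Function.update (fun j (_ : Fin (m j)) => (1:ℝ)) i
        (fun x => if x = ki then 1 else 0)) l h) j (k j) = 1 := by
    intro j hj
    rw [mem_erase, mem_erase] at hj
    rw [Function.update_of_ne hj.2.1, Function.update_of_ne hj.1]
  rw [Finset.prod_eq_one h1, Function.update_self,
    Function.update_of_ne (fun hh => hil hh.symm), Function.update_self, one_mul]

private lemma key2 (i l : Fin I) (hil : l ≠ i) (ki : Fin (m i)) (h : Fin (m l) → ℝ) :
    ∑ k ∈ univ.filter (fun k : ∀ j, Fin (m j) => k i = ki), h (k l)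
      = (∏ j ∈ (univ.erase i).erase l, (m j : ℝ)) * ∑ x, h x := by
  set g : ∀ j, Fin (m j) → ℝ := Function.update (Function.update
    (fun j (_ : Fin (m j)) => (1:ℝ)) i (fun x => if x = ki then 1 else 0)) l h with hg
  have lhs : ∑ k : ∀ j, Fin (m j), ∏ j, g j (k j)
      = ∑ k ∈ univ.filter (fun k : ∀ j, Fin (m j) => k i = ki), h (k l) := by
    rw [Finset.sum_filter]
    refine Finset.sum_congr rfl fun k _ => ?_
    rw [prod_eval_update₂ i l hil ki h g hg k]
    split <;> simp
  have rhs : ∏ j, ∑ x, g j x = (∏ j ∈ (univ.erase i).erase l, (m j : ℝ)) * ∑ x, h x := by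
    rw [← Finset.prod_erase_mul univ _ (mem_univ l),
      ← Finset.prod_erase_mul _ _ (mem_erase.2 ⟨fun hh => hil hh.symm, mem_univ i⟩)]
    have h1 : ∀ j ∈ (univ.erase l).erase i, (∑ x, g j x) = (m j : ℝ) := by
      intro j hj
      rw [mem_erase, mem_erase] at hj
      simp only [hg, Function.update_of_ne hj.2.1, Function.update_of_ne hj.1]
      simp
    rw [Finset.prod_congr rfl h1]
    simp only [hg, Function.update_self, Function.update_of_ne (fun hh => hil hh.symm : i ≠ l)]
    simp [Finset.erase_right_comm]
  rw [← lhs, ← Fintype.prod_sum, rhs]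

private lemma prod_eval_update₁ (i : Fin I) (ki : Fin (m i)) (k : ∀ j, Fin (m j)) :
    ∏ j, (Function.update (fun j (_ : Fin (m j)) => (1:ℝ)) i
      (fun x => if x = ki then 1 else 0)) j (k j) = (if k i = ki then 1 else 0) := by
  rw [← Finset.prod_erase_mul univ _ (mem_univ i)]
  have h1 : ∀ j ∈ univ.erase i,
      (Function.update (fun j (_ : Fin (m j)) => (1:ℝ)) i
        (fun x => if x = ki then 1 else 0)) j (k j) = 1 := by
    intro j hj
    rw [Function.update_of_ne (mem_erase.1 hj).1]
  rw [Finset.prod_eq_one h1, Function.update_self, one_mul]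

private lemma key1 (i : Fin I) (ki : Fin (m i)) :
    ∑ k ∈ univ.filter (fun k : ∀ j, Fin (m j) => k i = ki), (1:ℝ)
      = ∏ j ∈ univ.erase i, (m j : ℝ) := by
  set g : ∀ j, Fin (m j) → ℝ := Function.update
    (fun j (_ : Fin (m j)) => (1:ℝ)) i (fun x => if x = ki then 1 else 0) with hg
  have lhs : ∑ k : ∀ j, Fin (m j), ∏ j, g j (k j)
      = ∑ k ∈ univ.filter (fun k : ∀ j, Fin (m j) => k i = ki), (1:ℝ) := by
    rw [Finset.sum_filter]
    exact Finset.sum_congr rfl fun k _ => prod_eval_update₁ i ki k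
  have rhs : ∏ j, ∑ x, g j x = ∏ j ∈ univ.erase i, (m j : ℝ) := by
    rw [← Finset.prod_erase_mul univ _ (mem_univ i)]
    have h1 : ∀ j ∈ univ.erase i, (∑ x, g j x) = (m j : ℝ) := by
      intro j hj
      simp only [hg, Function.update_of_ne (mem_erase.1 hj).1]
      simp
    rw [Finset.prod_congr rfl h1]
    simp [hg]
  rw [← lhs, ← Fintype.prod_sum, rhs]

end helpers

set_option maxHeartbeats 1000000 in
theorem stmt2 (I : ℕ) (hI : 1 ≤ I) (m : Fin I → ℕ) (hm : ∀ i, 1 < m i)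
    (D : (∀ i, Fin (m i)) → ℤ)
    (wo ws : ℝ) (wm : Fin I → ℝ)
    (hwo : 0 ≤ wo) (hws : 0 ≤ ws) (hwm : ∀ i, 0 ≤ wm i)
    (hwsum : wo + ws + ∑ i, wm i = 1)
    (Dtot : ℝ) (hDtot : Dtot = ∑ k, (D k : ℝ))
    (Dmarg : ∀ i : Fin I, Fin (m i) → ℝ)
    (hDmarg : ∀ i ki, Dmarg i ki
      = ∑ k ∈ Finset.univ.filter (fun k => k i = ki), (D k : ℝ))
    (Λ : (∀ i, Fin (m i)) → ℝ)
    (hΛ : ∀ k, Λ k = wo * Dtot + (∑ i, wm i * Dmarg i (k i)) + ws * D k) :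
    ∀ (i : Fin I) (ki : Fin (m i)),
      (∑ k ∈ Finset.univ.filter (fun k => k i = ki), Λ k
        = (ws + wm i * ∏ j ∈ Finset.univ.erase i, (m j : ℝ)) * Dmarg i ki
          + ((∑ l ∈ Finset.univ.erase i,
                wm l * ∏ j ∈ (Finset.univ.erase i).erase l, (m j : ℝ))
              + wo * ∏ j ∈ Finset.univ.erase i, (m j : ℝ)) * Dtot)
      ∧ (0 < ws + wm i →
          Dmarg i ki
            = ((∑ k ∈ Finset.univ.filter (fun k => k i = ki), Λ k)
                - ((∑ l ∈ Finset.univ.erase i,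
                      wm l * ∏ j ∈ (Finset.univ.erase i).erase l, (m j : ℝ))
                    + wo * ∏ j ∈ Finset.univ.erase i, (m j : ℝ)) * Dtot)
              / (ws + wm i * ∏ j ∈ Finset.univ.erase i, (m j : ℝ))) := by
  intro i ki
  have hmargtot : ∀ l : Fin I, ∑ x, Dmarg l x = Dtot := by
    intro l
    rw [hDtot]
    simp only [hDmarg]
    exact Finset.sum_fiberwise univ (fun k => k l) (fun k => (D k : ℝ))
  set P : ℝ := ∏ j ∈ Finset.univ.erase i, (m j : ℝ) with hP
  have hsum1 : ∀ c : ℝ, ∑ _k ∈ univ.filter (fun k : ∀ j, Fin (m j) => k i = ki), c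
      = P * c := by
    intro c
    rw [hP, ← key1 i ki, Finset.sum_mul]
    simp
  have hmain : ∑ k ∈ Finset.univ.filter (fun k => k i = ki), Λ k
      = (ws + wm i * P) * Dmarg i ki
        + ((∑ l ∈ Finset.univ.erase i,
              wm l * ∏ j ∈ (Finset.univ.erase i).erase l, (m j : ℝ))
            + wo * P) * Dtot := by
    simp only [hΛ]
    rw [Finset.sum_add_distrib, Finset.sum_add_distrib, hsum1]
    have h2 : ∑ k ∈ univ.filter (fun k : ∀ j, Fin (m j) => k i = ki), ws * (D k : ℝ)
        = ws * Dmarg i ki := by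
      rw [← Finset.mul_sum, hDmarg]
    have h3 : ∑ k ∈ univ.filter (fun k : ∀ j, Fin (m j) => k i = ki),
          ∑ l, wm l * Dmarg l (k l)
        = (∑ l ∈ Finset.univ.erase i,
              wm l * ((∏ j ∈ (Finset.univ.erase i).erase l, (m j : ℝ)) * Dtot))
          + wm i * (P * Dmarg i ki) := by
      rw [Finset.sum_comm]
      rw [← Finset.sum_erase_add _ _ (mem_univ i)]
      congr 1
      · refine Finset.sum_congr rfl fun l hl => ?_
        rw [← Finset.mul_sum, key2 i l (mem_erase.1 hl).1 ki (Dmarg l), hmargtot l]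
      · rw [← Finset.mul_sum]
        congr 1
        have : ∀ k ∈ univ.filter (fun k : ∀ j, Fin (m j) => k i = ki),
            Dmarg i (k i) = Dmarg i ki := by
          intro k hk
          rw [(mem_filter.1 hk).2]
        rw [Finset.sum_congr rfl this, hsum1]
      done
    have h4 : ∑ l ∈ Finset.univ.erase i,
          wm l * ((∏ j ∈ (Finset.univ.erase i).erase l, (m j : ℝ)) * Dtot)
        = (∑ l ∈ Finset.univ.erase i,
            wm l * ∏ j ∈ (Finset.univ.erase i).erase l, (m j : ℝ)) * Dtot := by
      rw [Finset.sum_mul]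
      exact Finset.sum_congr rfl fun l _ => by ring
    rw [h2, h3, h4]
    ring
  refine ⟨hmain, fun hpos => ?_⟩
  have hP1 : (1:ℝ) ≤ P := by
    rw [hP, ← Nat.cast_prod]
    exact_mod_cast Finset.one_le_prod' fun j _ => (hm j).le
  have hden : 0 < ws + wm i * P := by
    calc 0 < ws + wm i := hpos
      _ ≤ ws + wm i * P := by nlinarith [hwm i]
  rw [hmain]
  field_simp
  try ring
end
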